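/- Let 𝒜 be an invertible 4 × 4 complex matrix and let 𝒱 ⊆ ℂ² ⊗ ℂ² ⊗ ℂ² be the orthogonal complement of the span of the vectors (1,α) ⊗ 𝒜(1,α,α²,α³) over all α ∈ ℂ. For i < j, let A_{ij} denote the 2 × 4 submatrix of 𝒜 formed by its i-th and j-th rows (rows indexed 0,1,2,3). If 𝒱 is a genuinely entangled subspace, then none of the submatrices A_{01}, A_{23}, A_{02}, A_{13} has (as its ordered list of four columns) either of the following forms: (0⃗, b, c, −ξ²b + ξc) for some b, c ∈ ℂ² and ξ ∈ ℂ, or (a, b, (ξ₂ − ξ₁²)a + ξ₁b, −ξ₁ξ₂a + ξ₂b) for some a, b ∈ ℂ² and ξ₁, ξ₂ ∈ ℂ. -/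

import Mathlib

/-!
If rows `i, j` of `A` have one of the two forms, then `A_{ij}(1, α, α², α³) = p(α) (u₀ + α u₁)`
for a polynomial `p` and fixed `u₀, u₁ ∈ ℂ²`. The row pairs `(0,1), (2,3)` are the slices `j = 0, 1`
of the second factor and `(0,2), (1,3)` the slices `k = 0, 1` of the third, so on that slice every
generator `(1, α) ⊗ 𝒜(1, α, α², α³)` is a multiple of `(1, α) ⊗ (u₀ + α u₁) = w₀ + α w₁ + α² w₂`.
These span at most three dimensions of `ℂ² ⊗ ℂ²`; a nonzero `g` orthogonal to them, placed on that
slice, is a vector of `𝒱` that is biproduct across `B|AC` (resp. `C|AB`).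
-/

noncomputable section

abbrev TriH (d₁ d₂ d₃ : ℕ) := EuclideanSpace ℂ (Fin d₁ × Fin d₂ × Fin d₃)

def BiprodA {d₁ d₂ d₃ : ℕ} (ψ : TriH d₁ d₂ d₃) : Prop :=
  ∃ (a : Fin d₁ → ℂ) (g : Fin d₂ × Fin d₃ → ℂ), ∀ i j k, ψ (i, j, k) = a i * g (j, k)

def BiprodB {d₁ d₂ d₃ : ℕ} (ψ : TriH d₁ d₂ d₃) : Prop :=
  ∃ (b : Fin d₂ → ℂ) (g : Fin d₁ × Fin d₃ → ℂ), ∀ i j k, ψ (i, j, k) = b j * g (i, k)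

def BiprodC {d₁ d₂ d₃ : ℕ} (ψ : TriH d₁ d₂ d₃) : Prop :=
  ∃ (c : Fin d₃ → ℂ) (g : Fin d₁ × Fin d₂ → ℂ), ∀ i j k, ψ (i, j, k) = c k * g (i, j)

def IsGME3 {d₁ d₂ d₃ : ℕ} (ψ : TriH d₁ d₂ d₃) : Prop :=
  ψ ≠ 0 ∧ ¬ BiprodA ψ ∧ ¬ BiprodB ψ ∧ ¬ BiprodC ψ

def IsGES3 {d₁ d₂ d₃ : ℕ} (V : Submodule ℂ (TriH d₁ d₂ d₃)) : Prop :=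
  ∀ ψ ∈ V, ψ ≠ 0 → IsGME3 ψ

def idx4 (j k : Fin 2) : Fin 4 := ⟨2 * j.1 + k.1, by have := j.2; have := k.2; omega⟩

def curveA (A : Matrix (Fin 4) (Fin 4) ℂ) (α : ℂ) : TriH 2 2 2 :=
  WithLp.toLp 2 (fun p : Fin 2 × Fin 2 × Fin 2 => ![(1 : ℂ), α] p.1 * A.mulVec ![1, α, α ^ 2, α ^ 3] (idx4 p.2.1 p.2.2))

/-- The `t`-th column of the `2 × 4` submatrix `A_{ij}` of `𝒜` formed by rows `i` and `j`. -/
def col (A : Matrix (Fin 4) (Fin 4) ℂ) (i j : Fin 4) (t : Fin 4) : Fin 2 → ℂ :=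
  ![A i t, A j t]

/-- The forbidden form `(0⃗, b, c, −ξ²b + ξc)` of the columns of `A_{ij}`. -/
def BadForm1 (A : Matrix (Fin 4) (Fin 4) ℂ) (i j : Fin 4) : Prop :=
  ∃ (b c : Fin 2 → ℂ) (ξ : ℂ),
    col A i j 0 = 0 ∧ col A i j 1 = b ∧ col A i j 2 = c ∧
    col A i j 3 = (-(ξ ^ 2)) • b + ξ • c

/-- The forbidden form `(a, b, (ξ₂ − ξ₁²)a + ξ₁b, −ξ₁ξ₂a + ξ₂b)` of the columns of `A_{ij}`. -/
def BadForm2 (A : Matrix (Fin 4) (Fin 4) ℂ) (i j : Fin 4) : Prop :=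
  ∃ (a b : Fin 2 → ℂ) (ξ₁ ξ₂ : ℂ),
    col A i j 0 = a ∧ col A i j 1 = b ∧
    col A i j 2 = (ξ₂ - ξ₁ ^ 2) • a + ξ₁ • b ∧
    col A i j 3 = (-(ξ₁ * ξ₂)) • a + ξ₂ • b

open Matrix Submodule

lemma mem_orthogonal_span_of_forall_inner_eq_zero {𝕜 E : Type*} [RCLike 𝕜] [NormedAddCommGroup E]
    [InnerProductSpace 𝕜 E] {S : Set E} {v : E} (h : ∀ x ∈ S, inner 𝕜 x v = 0) :
    v ∈ (span 𝕜 S)ᗮ := by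
  rw [← span_singleton_le_iff_mem, ← isOrtho_iff_le, isOrtho_span]
  rintro _ rfl x hx
  rw [inner_eq_zero_symm]
  exact h x hx

section Slices

variable {d₁ d₂ d₃ : ℕ}

def insertB (j₀ : Fin d₂) (g : EuclideanSpace ℂ (Fin d₁ × Fin d₃)) : TriH d₁ d₂ d₃ :=
  WithLp.toLp 2 fun p => if p.2.1 = j₀ then g (p.1, p.2.2) else 0

def insertC (k₀ : Fin d₃) (g : EuclideanSpace ℂ (Fin d₁ × Fin d₂)) : TriH d₁ d₂ d₃ :=
  WithLp.toLp 2 fun p => if p.2.2 = k₀ then g (p.1, p.2.1) else 0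

def sliceB (j₀ : Fin d₂) (x : TriH d₁ d₂ d₃) : EuclideanSpace ℂ (Fin d₁ × Fin d₃) :=
  WithLp.toLp 2 fun q => x (q.1, j₀, q.2)

def sliceC (k₀ : Fin d₃) (x : TriH d₁ d₂ d₃) : EuclideanSpace ℂ (Fin d₁ × Fin d₂) :=
  WithLp.toLp 2 fun q => x (q.1, q.2, k₀)

lemma inner_insertB (x : TriH d₁ d₂ d₃) (j₀ : Fin d₂) (g : EuclideanSpace ℂ (Fin d₁ × Fin d₃)) :
    inner ℂ x (insertB j₀ g) = inner ℂ (sliceB j₀ x) g := by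
  simp only [PiLp.inner_apply, Fintype.sum_prod_type, insertB, sliceB]
  rw [Finset.sum_congr rfl fun i _ => Finset.sum_comm]
  simp

lemma inner_insertC (x : TriH d₁ d₂ d₃) (k₀ : Fin d₃) (g : EuclideanSpace ℂ (Fin d₁ × Fin d₂)) :
    inner ℂ x (insertC k₀ g) = inner ℂ (sliceC k₀ x) g := by
  simp [PiLp.inner_apply, Fintype.sum_prod_type, insertC, sliceC]

lemma insertB_ne_zero {j₀ : Fin d₂} {g : EuclideanSpace ℂ (Fin d₁ × Fin d₃)} (hg : g ≠ 0) :
    insertB j₀ g ≠ 0 := by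
  contrapose! hg
  ext ⟨i, k⟩
  simpa [insertB] using congr($hg (i, j₀, k))

lemma insertC_ne_zero {k₀ : Fin d₃} {g : EuclideanSpace ℂ (Fin d₁ × Fin d₂)} (hg : g ≠ 0) :
    insertC k₀ g ≠ 0 := by
  contrapose! hg
  ext ⟨i, j⟩
  simpa [insertC] using congr($hg (i, j, k₀))

lemma biprodB_insertB (j₀ : Fin d₂) (g : EuclideanSpace ℂ (Fin d₁ × Fin d₃)) :
    BiprodB (insertB j₀ g) :=
  ⟨fun j => if j = j₀ then 1 else 0, fun q => g q, fun i j k => by simp [insertB]⟩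

lemma biprodC_insertC (k₀ : Fin d₃) (g : EuclideanSpace ℂ (Fin d₁ × Fin d₂)) :
    BiprodC (insertC k₀ g) :=
  ⟨fun k => if k = k₀ then 1 else 0, fun q => g q, fun i j k => by simp [insertC]⟩

lemma not_isGES3_of_forall_inner_sliceB_eq_zero {S : Set (TriH d₁ d₂ d₃)} (j₀ : Fin d₂)
    {g : EuclideanSpace ℂ (Fin d₁ × Fin d₃)} (hg : g ≠ 0)
    (hS : ∀ x ∈ S, inner ℂ (sliceB j₀ x) g = 0) : ¬ IsGES3 (span ℂ S)ᗮ := fun hGES =>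
  have hmem : insertB j₀ g ∈ (span ℂ S)ᗮ :=
    mem_orthogonal_span_of_forall_inner_eq_zero fun x hx => (inner_insertB x j₀ g).trans (hS x hx)
  (hGES _ hmem (insertB_ne_zero hg)).2.2.1 (biprodB_insertB j₀ g)

lemma not_isGES3_of_forall_inner_sliceC_eq_zero {S : Set (TriH d₁ d₂ d₃)} (k₀ : Fin d₃)
    {g : EuclideanSpace ℂ (Fin d₁ × Fin d₂)} (hg : g ≠ 0)
    (hS : ∀ x ∈ S, inner ℂ (sliceC k₀ x) g = 0) : ¬ IsGES3 (span ℂ S)ᗮ := fun hGES =>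
  have hmem : insertC k₀ g ∈ (span ℂ S)ᗮ :=
    mem_orthogonal_span_of_forall_inner_eq_zero fun x hx => (inner_insertC x k₀ g).trans (hS x hx)
  (hGES _ hmem (insertC_ne_zero hg)).2.2.2 (biprodC_insertC k₀ g)

end Slices

def segreConic (u₀ u₁ : Fin 2 → ℂ) (α : ℂ) : EuclideanSpace ℂ (Fin 2 × Fin 2) :=
  WithLp.toLp 2 fun q => ![1, α] q.1 * (u₀ q.2 + α * u₁ q.2)

lemma exists_ne_zero_forall_inner_segreConic_eq_zero (u₀ u₁ : Fin 2 → ℂ) :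
    ∃ g : EuclideanSpace ℂ (Fin 2 × Fin 2), g ≠ 0 ∧ ∀ α, inner ℂ (segreConic u₀ u₁ α) g = 0 := by
  let w : Fin 3 → EuclideanSpace ℂ (Fin 2 × Fin 2) :=
    ![WithLp.toLp 2 fun q => ![1, 0] q.1 * u₀ q.2,
      WithLp.toLp 2 fun q => ![1, 0] q.1 * u₁ q.2 + ![0, 1] q.1 * u₀ q.2,
      WithLp.toLp 2 fun q => ![0, 1] q.1 * u₁ q.2]
  let W := span ℂ (Set.range w)
  have hW : W ≠ ⊤ := by
    intro h
    have hrank : Module.finrank ℂ W ≤ 3 := finrank_range_le_card w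
    rw [h, finrank_top, finrank_euclideanSpace] at hrank
    simp at hrank
  obtain ⟨g, hg, hg0⟩ := exists_mem_ne_zero_of_ne_bot (mt orthogonal_eq_bot_iff.mp hW)
  refine ⟨g, hg0, fun α => inner_right_of_mem_orthogonal ?_ hg⟩
  have hconic : segreConic u₀ u₁ α = w 0 + α • w 1 + α ^ 2 • w 2 := by
    ext ⟨i, k⟩
    fin_cases i <;>
      simp only [w, segreConic, Fin.zero_eta, Fin.mk_one, cons_val_zero, cons_val_one,
        cons_val_fin_one, cons_val, PiLp.add_apply, PiLp.smul_apply, smul_eq_mul] <;>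
      ring
  rw [hconic]
  exact add_mem (add_mem (subset_span ⟨0, rfl⟩) (smul_mem _ _ (subset_span ⟨1, rfl⟩)))
    (smul_mem _ _ (subset_span ⟨2, rfl⟩))

def HasLinearFactor (A : Matrix (Fin 4) (Fin 4) ℂ) (i j : Fin 4) : Prop :=
  ∃ u₀ u₁ : Fin 2 → ℂ, ∀ α : ℂ, ∃ c : ℂ, ∀ s : Fin 2,
    (A *ᵥ ![1, α, α ^ 2, α ^ 3]) (![i, j] s) = c * (u₀ s + α * u₁ s)

section LinearFactor

variable {A : Matrix (Fin 4) (Fin 4) ℂ} {i j : Fin 4}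

lemma mulVec_momentCurve_apply (A : Matrix (Fin 4) (Fin 4) ℂ) (α : ℂ) (r : Fin 4) :
    (A *ᵥ ![1, α, α ^ 2, α ^ 3]) r = A r 0 + A r 1 * α + A r 2 * α ^ 2 + A r 3 * α ^ 3 := by
  simp [Matrix.mulVec, dotProduct, Fin.sum_univ_four]

lemma apply_vecCons_eq_col (A : Matrix (Fin 4) (Fin 4) ℂ) (i j t : Fin 4) (s : Fin 2) :
    A (![i, j] s) t = col A i j t s := by
  fin_cases s <;> rfl

lemma BadForm1.hasLinearFactor (h : BadForm1 A i j) : HasLinearFactor A i j := by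
  obtain ⟨b, c, ξ, h0, h1, h2, h3⟩ := h
  refine ⟨b, c - ξ • b, fun α => ⟨α * (1 + ξ * α), fun s => ?_⟩⟩
  simp only [mulVec_momentCurve_apply, apply_vecCons_eq_col, h0, h1, h2, h3, Pi.zero_apply,
    Pi.add_apply, Pi.smul_apply, Pi.sub_apply, smul_eq_mul]
  ring

lemma BadForm2.hasLinearFactor (h : BadForm2 A i j) : HasLinearFactor A i j := by
  obtain ⟨a, b, ξ₁, ξ₂, h0, h1, h2, h3⟩ := h
  refine ⟨a, b - ξ₁ • a, fun α => ⟨1 + ξ₁ * α + ξ₂ * α ^ 2, fun s => ?_⟩⟩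
  simp only [mulVec_momentCurve_apply, apply_vecCons_eq_col, h0, h1, h2, h3, Pi.add_apply,
    Pi.smul_apply, Pi.sub_apply, smul_eq_mul]
  ring

lemma sliceB_curveA {j₀ : Fin 2} {α c : ℂ} {u₀ u₁ : Fin 2 → ℂ}
    (hrows : ∀ s, (A *ᵥ ![1, α, α ^ 2, α ^ 3]) (idx4 j₀ s) = c * (u₀ s + α * u₁ s)) :
    sliceB j₀ (curveA A α) = c • segreConic u₀ u₁ α := by
  ext ⟨i, k⟩
  simp only [sliceB, curveA, segreConic, hrows, PiLp.smul_apply, smul_eq_mul]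
  ring

lemma sliceC_curveA {k₀ : Fin 2} {α c : ℂ} {u₀ u₁ : Fin 2 → ℂ}
    (hrows : ∀ s, (A *ᵥ ![1, α, α ^ 2, α ^ 3]) (idx4 s k₀) = c * (u₀ s + α * u₁ s)) :
    sliceC k₀ (curveA A α) = c • segreConic u₀ u₁ α := by
  ext ⟨i, j⟩
  simp only [sliceC, curveA, segreConic, hrows, PiLp.smul_apply, smul_eq_mul]
  ring

lemma HasLinearFactor.not_isGES3_of_idx4_left {j₀ : Fin 2}
    (h : HasLinearFactor A (idx4 j₀ 0) (idx4 j₀ 1)) :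
    ¬ IsGES3 (span ℂ (Set.range (curveA A)))ᗮ := by
  obtain ⟨u₀, u₁, hfactor⟩ := h
  obtain ⟨g, hg0, hg⟩ := exists_ne_zero_forall_inner_segreConic_eq_zero u₀ u₁
  refine not_isGES3_of_forall_inner_sliceB_eq_zero j₀ hg0 ?_
  rintro _ ⟨α, rfl⟩
  obtain ⟨c, hc⟩ := hfactor α
  have hrows : ∀ s, (A *ᵥ ![1, α, α ^ 2, α ^ 3]) (idx4 j₀ s) = c * (u₀ s + α * u₁ s) := by
    intro s
    fin_cases s
    exacts [hc 0, hc 1]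
  rw [sliceB_curveA hrows, inner_smul_left, hg, mul_zero]

lemma HasLinearFactor.not_isGES3_of_idx4_right {k₀ : Fin 2}
    (h : HasLinearFactor A (idx4 0 k₀) (idx4 1 k₀)) :
    ¬ IsGES3 (span ℂ (Set.range (curveA A)))ᗮ := by
  obtain ⟨u₀, u₁, hfactor⟩ := h
  obtain ⟨g, hg0, hg⟩ := exists_ne_zero_forall_inner_segreConic_eq_zero u₀ u₁
  refine not_isGES3_of_forall_inner_sliceC_eq_zero k₀ hg0 ?_
  rintro _ ⟨α, rfl⟩
  obtain ⟨c, hc⟩ := hfactor α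
  have hrows : ∀ s, (A *ᵥ ![1, α, α ^ 2, α ^ 3]) (idx4 s k₀) = c * (u₀ s + α * u₁ s) := by
    intro s
    fin_cases s
    exacts [hc 0, hc 1]
  rw [sliceC_curveA hrows, inner_smul_left, hg, mul_zero]

lemma not_badForm_of_not_hasLinearFactor (h : ¬ HasLinearFactor A i j) :
    ¬ BadForm1 A i j ∧ ¬ BadForm2 A i j :=
  ⟨fun h1 => h h1.hasLinearFactor, fun h2 => h h2.hasLinearFactor⟩

end LinearFactor

theorem necessary_condition_on_A_general (A : Matrix (Fin 4) (Fin 4) ℂ)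
    (hGES : IsGES3 ((Submodule.span ℂ (Set.range (curveA A)))ᗮ)) :
    (¬ BadForm1 A 0 1 ∧ ¬ BadForm2 A 0 1) ∧
    (¬ BadForm1 A 2 3 ∧ ¬ BadForm2 A 2 3) ∧
    (¬ BadForm1 A 0 2 ∧ ¬ BadForm2 A 0 2) ∧
    (¬ BadForm1 A 1 3 ∧ ¬ BadForm2 A 1 3) := by
  refine ⟨?_, ?_, ?_, ?_⟩ <;> refine not_badForm_of_not_hasLinearFactor fun h => ?_
  exacts [h.not_isGES3_of_idx4_left (j₀ := 0) hGES, h.not_isGES3_of_idx4_left (j₀ := 1) hGES,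
    h.not_isGES3_of_idx4_right (k₀ := 0) hGES, h.not_isGES3_of_idx4_right (k₀ := 1) hGES]

/-- if `𝒱 = (span{(1,α) ⊗ 𝒜(1,α,α²,α³)})^⊥` is a GES, then none of the
row-pair submatrices `A₀₁, A₂₃, A₀₂, A₁₃` of `𝒜` has either forbidden form. -/
theorem necessary_condition_on_A (A : Matrix (Fin 4) (Fin 4) ℂ)
    (hA : IsUnit A.det)
    (hGES : IsGES3 ((Submodule.span ℂ (Set.range (curveA A)))ᗮ)) :
    (¬ BadForm1 A 0 1 ∧ ¬ BadForm2 A 0 1) ∧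
    (¬ BadForm1 A 2 3 ∧ ¬ BadForm2 A 2 3) ∧
    (¬ BadForm1 A 0 2 ∧ ¬ BadForm2 A 0 2) ∧
    (¬ BadForm1 A 1 3 ∧ ¬ BadForm2 A 1 3) :=
  necessary_condition_on_A_general A hGES
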